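/- arXiv:2106.07560 — 4 statements merged into one kernel-verified Lean document; each statement's English description precedes it below -/
import Mathlib

section
/- Let A be an n×n nonnegative matrix whose rows all have sum at most β_max < 1. Then the map Φ(x) = p ∧ (Aᵀx + c), where ∧ denotes componentwise minimum and p, c ∈ ℝⁿ are fixed, is a contraction in the ℓ₁ norm with contraction factor β_max. -/
open Matrix

/-- The Eisenberg–Noe clearing operator `Φ(x) = p ∧ (Aᵀx + c)` is a contraction in the
`ℓ₁` norm with contraction factor `β_max` when `A` is nonnegative with row sums at most
`β_max < 1`. -/
theorem clearing_operator_contraction (n : ℕ) (A : Matrix (Fin n) (Fin n) ℝ) (βmax : ℝ)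
    (hA : ∀ i j, 0 ≤ A i j) (hrow : ∀ i, ∑ j, A i j ≤ βmax) (hβ : βmax < 1)
    (p c : Fin n → ℝ) (x y : Fin n → ℝ) :
    ∑ i, |min (p i) ((Aᵀ.mulVec x) i + c i) - min (p i) ((Aᵀ.mulVec y) i + c i)|
      ≤ βmax * ∑ i, |x i - y i| := by
  have h1 : ∑ i, |min (p i) ((Aᵀ.mulVec x) i + c i) - min (p i) ((Aᵀ.mulVec y) i + c i)|
      ≤ ∑ i, |(Aᵀ.mulVec x) i - (Aᵀ.mulVec y) i| := by
    apply Finset.sum_le_sum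
    intro i _
    have := abs_min_sub_min_le_max (p i) ((Aᵀ.mulVec x) i + c i) (p i) ((Aᵀ.mulVec y) i + c i)
    simp at this
    calc |min (p i) ((Aᵀ.mulVec x) i + c i) - min (p i) ((Aᵀ.mulVec y) i + c i)|
        ≤ |(Aᵀ.mulVec x) i + c i - ((Aᵀ.mulVec y) i + c i)| := by
          simpa using this
      _ = |(Aᵀ.mulVec x) i - (Aᵀ.mulVec y) i| := by ring_nf
  have h2 : ∑ i, |(Aᵀ.mulVec x) i - (Aᵀ.mulVec y) i| ≤ βmax * ∑ i, |x i - y i| := by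
    have : ∀ i, |(Aᵀ.mulVec x) i - (Aᵀ.mulVec y) i| ≤ ∑ j, A j i * |x j - y j| := by
      intro i
      simp only [mulVec, dotProduct, transpose_apply]
      rw [← Finset.sum_sub_distrib]
      refine (Finset.abs_sum_le_sum_abs _ _).trans ?_
      apply Finset.sum_le_sum
      intro j _
      rw [← mul_sub, abs_mul, abs_of_nonneg (hA j i)]
    calc ∑ i, |(Aᵀ.mulVec x) i - (Aᵀ.mulVec y) i|
        ≤ ∑ i, ∑ j, A j i * |x j - y j| := Finset.sum_le_sum fun i _ => this i
      _ = ∑ j, (∑ i, A j i) * |x j - y j| := by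
          rw [Finset.sum_comm]; simp [Finset.sum_mul]
      _ ≤ ∑ j, βmax * |x j - y j| := by
          apply Finset.sum_le_sum
          intro j _
          exact mul_le_mul_of_nonneg_right (hrow j) (abs_nonneg _)
      _ = βmax * ∑ j, |x j - y j| := by rw [Finset.mul_sum]
  exact h1.trans h2
end

section
/- Let A ∈ ℝⁿˣⁿ be nonnegative with all row sums at most β_max < 1 and let p̄_S, p̄_T ∈ [0,p] satisfy the fixed-point equations p̄_S = p ∧ (Aᵀ p̄_S + c + L_S) and p̄_T = p ∧ (Aᵀ p̄_T + c + L_T), where 0 ≤ L_S ≤ L_T componentwise. Then ∑_j (p̄_T - p̄_S)_j ≤ (∑_j (L_T - L_S)_j) / (1 - β_max). -/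
open Matrix

/-- Marginal Gain Upper Bound Lemma: increasing the bailout vector from `L_S` to `L_T`
increases total clearing payments by at most `∑ (L_T - L_S) / (1 - β_max)`. -/
theorem marginal_gain_upper_bound (n : ℕ) (A : Matrix (Fin n) (Fin n) ℝ) (βmax : ℝ)
    (hA : ∀ i j, 0 ≤ A i j) (hrow : ∀ i, ∑ j, A i j ≤ βmax) (hβ : βmax < 1)
    (p c LS LT : Fin n → ℝ)
    (hLS : ∀ i, 0 ≤ LS i) (hLST : ∀ i, LS i ≤ LT i)
    (pS pT : Fin n → ℝ)
    (hS0 : ∀ i, 0 ≤ pS i) (hSp : ∀ i, pS i ≤ p i)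
    (hT0 : ∀ i, 0 ≤ pT i) (hTp : ∀ i, pT i ≤ p i)
    (hfixS : ∀ i, pS i = min (p i) ((Aᵀ.mulVec pS) i + c i + LS i))
    (hfixT : ∀ i, pT i = min (p i) ((Aᵀ.mulVec pT) i + c i + LT i)) :
    ∑ i, (pT i - pS i) ≤ (∑ i, (LT i - LS i)) / (1 - βmax) := by
  set D : Fin n → ℝ := fun i => |pT i - pS i| with hD
  have hβpos : (0:ℝ) < 1 - βmax := by linarith
  -- pointwise bound
  have hpt : ∀ i, D i ≤ (Aᵀ.mulVec D) i + (LT i - LS i) := by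
    intro i
    have h1 : D i ≤ |((Aᵀ.mulVec pT) i + c i + LT i) - ((Aᵀ.mulVec pS) i + c i + LS i)| := by
      rw [hD]
      simp only
      rw [hfixT i, hfixS i]
      calc |min (p i) ((Aᵀ.mulVec pT) i + c i + LT i)
              - min (p i) ((Aᵀ.mulVec pS) i + c i + LS i)|
          ≤ max |p i - p i| |((Aᵀ.mulVec pT) i + c i + LT i)
              - ((Aᵀ.mulVec pS) i + c i + LS i)| := abs_min_sub_min_le_max _ _ _ _
        _ = _ := by simp
    have h2 : ((Aᵀ.mulVec pT) i + c i + LT i) - ((Aᵀ.mulVec pS) i + c i + LS i)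
        = (∑ j, A j i * (pT j - pS j)) + (LT i - LS i) := by
      simp only [Matrix.mulVec, dotProduct, Matrix.transpose_apply]
      have : ∑ j, A j i * (pT j - pS j) = (∑ j, A j i * pT j) - ∑ j, A j i * pS j := by
        simp [mul_sub, Finset.sum_sub_distrib]
      rw [this]; ring
    have h3 : |(∑ j, A j i * (pT j - pS j)) + (LT i - LS i)|
        ≤ (∑ j, A j i * D j) + (LT i - LS i) := by
      calc |(∑ j, A j i * (pT j - pS j)) + (LT i - LS i)|
          ≤ |∑ j, A j i * (pT j - pS j)| + |LT i - LS i| := abs_add_le _ _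
        _ ≤ (∑ j, A j i * D j) + (LT i - LS i) := by
            gcongr
            · calc |∑ j, A j i * (pT j - pS j)| ≤ ∑ j, |A j i * (pT j - pS j)| :=
                    Finset.abs_sum_le_sum_abs _ _
                _ = ∑ j, A j i * D j := by
                    apply Finset.sum_congr rfl
                    intro j _
                    rw [abs_mul, abs_of_nonneg (hA j i)]
            · rw [abs_of_nonneg (by linarith [hLST i])]
    have h4 : (Aᵀ.mulVec D) i = ∑ j, A j i * D j := by
      simp [Matrix.mulVec, dotProduct, Matrix.transpose_apply]
    rw [h2] at h1
    rw [h4]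
    exact h1.trans h3
  have hDnn : ∀ i, 0 ≤ D i := fun i => abs_nonneg _
  -- sum bound
  have hsum : ∑ i, D i ≤ βmax * (∑ i, D i) + ∑ i, (LT i - LS i) := by
    calc ∑ i, D i ≤ ∑ i, ((Aᵀ.mulVec D) i + (LT i - LS i)) :=
          Finset.sum_le_sum (fun i _ => hpt i)
      _ = (∑ i, (Aᵀ.mulVec D) i) + ∑ i, (LT i - LS i) := Finset.sum_add_distrib
      _ ≤ βmax * (∑ i, D i) + ∑ i, (LT i - LS i) := by
          gcongr ?_ + _
          have : (∑ i, (Aᵀ.mulVec D) i) = ∑ j, (∑ i, A j i) * D j := by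
            simp only [Matrix.mulVec, dotProduct, Matrix.transpose_apply]
            rw [Finset.sum_comm]
            simp [Finset.sum_mul]
          rw [this, Finset.mul_sum]
          apply Finset.sum_le_sum
          intro j _
          exact mul_le_mul_of_nonneg_right (hrow j) (hDnn j)
  have hfinal : ∑ i, D i ≤ (∑ i, (LT i - LS i)) / (1 - βmax) := by
    rw [le_div_iff₀ hβpos]
    nlinarith [hsum]
  calc ∑ i, (pT i - pS i) ≤ ∑ i, D i :=
        Finset.sum_le_sum (fun i _ => le_abs_self _)
    _ ≤ _ := hfinal
end

section
/- Let G = ([n], E) be a finite connected undirected graph and for x ∈ ℝⁿ with x ≠ 0 and median(x) = 0 define ψ(x) = (∑_{(i,j)∈E} |x_i - x_j|) / (∑_i |x_i|). Then the conductance φ(G) = min_{∅ ⊂ S ⊂ [n], |S| ≤ n/2} e(S, S̄)/|S| satisfies φ(G) = min over all such x of ψ(x). -/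
/-!
Slicing a nonnegative `y` at its least positive value `m` writes it as `m • 1_T + (y - m)⁺`,
where `T` is the support of `y` and `(y - m)⁺` has strictly smaller support. The two pieces vary
monotonically together, so the edge variation `∑ |y i - y j|` is additive on them, and the first
contributes `2 m e(T, Tᶜ) ≥ 2 m φ |T|`. Induction on the support gives `2 φ ∑ y ≤ ∑ |y i - y j|`
whenever `y` is supported on at most half of the vertices. A vector with median zero is `x⁺ - x⁻`
with both parts supported on at most half of the vertices, and its edge variation splits the same
way, so `ψ(x) ≥ φ`; the indicator of an optimal cut attains `φ`.
-/

open Finset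

namespace SimpleGraph

variable {V : Type*} [Fintype V] (G : SimpleGraph V) [DecidableRel G.Adj]

/-- The sum runs over ordered pairs, so every edge is counted twice. -/
def edgeVariation (x : V → ℝ) : ℝ := ∑ i, ∑ j, if G.Adj i j then |x i - x j| else 0

theorem edgeVariation_add {x y : V → ℝ} (h : Monovary x y) :
    G.edgeVariation (x + y) = G.edgeVariation x + G.edgeVariation y := by
  simp only [edgeVariation, ← sum_add_distrib]
  refine sum_congr rfl fun i _ => sum_congr rfl fun j _ => ?_
  split_ifs
  · rw [Pi.add_apply, Pi.add_apply, add_sub_add_comm, abs_add_eq_add_abs_iff, ← mul_nonneg_iff]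
    exact monovary_iff_forall_mul_nonneg.1 h j i
  · rw [add_zero]

theorem edgeVariation_smul (c : ℝ) (x : V → ℝ) :
    G.edgeVariation (c • x) = |c| * G.edgeVariation x := by
  simp only [edgeVariation, mul_sum, Pi.smul_apply, smul_eq_mul, ← mul_sub, abs_mul, mul_ite,
    mul_zero]

theorem edgeVariation_neg (x : V → ℝ) : G.edgeVariation (-x) = G.edgeVariation x := by
  simpa using G.edgeVariation_smul (-1) x

theorem edgeVariation_eq_posPart_add_negPart (x : V → ℝ) :
    G.edgeVariation x = G.edgeVariation x⁺ + G.edgeVariation x⁻ := by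
  have hmono : Monotone fun a : ℝ => -a⁻ := fun a b hab => neg_le_neg (negPart_anti hab)
  calc G.edgeVariation x = G.edgeVariation ((·⁺) ∘ x + (fun a => -a⁻) ∘ x) := by
        congr 1; ext i; simp [← sub_eq_add_neg]
    _ = G.edgeVariation x⁺ + G.edgeVariation (-x⁻) :=
        G.edgeVariation_add ((posPart_mono.monovary hmono).comp_right x)
    _ = G.edgeVariation x⁺ + G.edgeVariation x⁻ := by rw [edgeVariation_neg]

theorem edgeVariation_min_add_posPart_sub (y : V → ℝ) (m : ℝ) :
    G.edgeVariation (fun i => min (y i) m) + G.edgeVariation (fun i => (y i - m)⁺) =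
      G.edgeVariation y := by
  have hlow : Monotone fun a : ℝ => min a m := fun _ _ h => min_le_min_right m h
  have hhigh : Monotone fun a : ℝ => (a - m)⁺ := fun _ _ h => posPart_mono (sub_le_sub_right h m)
  calc _ = G.edgeVariation ((fun a => min a m) ∘ y + (fun a => (a - m)⁺) ∘ y) :=
        (G.edgeVariation_add ((hlow.monovary hhigh).comp_right y)).symm
    _ = G.edgeVariation y := by
        congr 1; ext i
        rcases le_total (y i) m with h | h <;> simp [h, sub_nonpos.2 h]

variable [DecidableEq V]

def cutSize (S : Finset V) : ℝ := ∑ i ∈ S, ∑ j ∈ Sᶜ, if G.Adj i j then 1 else 0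

def cutRatios : Set ℝ :=
  {r | ∃ S : Finset V, S.Nonempty ∧ 2 * #S ≤ Fintype.card V ∧ r = G.cutSize S / #S}

noncomputable def conductance : ℝ := sInf G.cutRatios

theorem finite_cutRatios : G.cutRatios.Finite :=
  (Set.finite_range fun S : Finset V => G.cutSize S / #S).subset <| by
    rintro _ ⟨S, -, -, rfl⟩
    exact ⟨S, rfl⟩

theorem conductance_mem_cutRatios (hV : 2 ≤ Fintype.card V) : G.conductance ∈ G.cutRatios := by
  obtain ⟨v⟩ : Nonempty V := Fintype.card_pos_iff.1 (by omega)
  exact Set.Nonempty.csInf_mem ⟨_, {v}, singleton_nonempty v, by simpa, rfl⟩ G.finite_cutRatios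

theorem conductance_mul_card_le_cutSize {S : Finset V} (hS : S.Nonempty)
    (hSV : 2 * #S ≤ Fintype.card V) : G.conductance * #S ≤ G.cutSize S := by
  have h := csInf_le G.finite_cutRatios.bddBelow ⟨S, hS, hSV, rfl⟩
  rwa [le_div_iff₀ (by simpa using hS.card_pos)] at h

theorem edgeVariation_indicator (S : Finset V) :
    G.edgeVariation ((S : Set V).indicator 1) = 2 * G.cutSize S := by
  let a (i j : V) : ℝ := if G.Adj i j then 1 else 0
  have hsymm : ∑ i ∈ Sᶜ, ∑ j ∈ S, a i j = G.cutSize S := by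
    rw [sum_comm]; simp only [a, G.adj_comm]; rfl
  have hcross (i j : V) :
      (if G.Adj i j then |(S : Set V).indicator 1 i - (S : Set V).indicator 1 j| else 0) =
        (if i ∈ S then if j ∈ Sᶜ then a i j else 0 else 0) +
          (if i ∈ Sᶜ then if j ∈ S then a i j else 0 else 0) := by
    by_cases hi : i ∈ S <;> by_cases hj : j ∈ S <;> simp [a, hi, hj]
  simp only [edgeVariation, hcross, sum_add_distrib, sum_ite_irrel, sum_const_zero,
    Fintype.sum_ite_mem, hsymm]
  rw [two_mul]; rfl

theorem two_mul_mul_sum_le_edgeVariation_of_cutSize {φ : ℝ} {y : V → ℝ} (hy : 0 ≤ y)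
    (hcut : ∀ S : Finset V, S ⊆ ({i | y i ≠ 0} : Finset V) → S.Nonempty →
      φ * #S ≤ G.cutSize S) :
    2 * φ * ∑ i, y i ≤ G.edgeVariation y := by
  induction hk : #{i | y i ≠ 0} using Nat.strong_induction_on generalizing y with
  | _ k ih =>
    set T : Finset V := {i | y i ≠ 0}
    rcases T.eq_empty_or_nonempty with hT | hT
    · have hy0 : y = 0 := funext fun i => by
        simpa [T] using filter_eq_empty_iff.1 hT (mem_univ i)
      simp [hy0, edgeVariation]
    obtain ⟨i₀, hi₀, hmin⟩ := T.exists_min_image y hT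
    set m := y i₀
    have hm : 0 < m := (hy i₀).lt_of_ne' (mem_filter.1 hi₀).2
    set z : V → ℝ := fun i => (y i - m)⁺
    have hlevel : (fun i => min (y i) m) = m • (T : Set V).indicator 1 := by
      ext i
      by_cases hi : i ∈ T
      · simp [hi, hmin i hi]
      · have : y i = 0 := by simpa [T] using hi
        simp [hi, this, hm.le]
    have hE : G.edgeVariation y = 2 * m * G.cutSize T + G.edgeVariation z := by
      rw [← G.edgeVariation_min_add_posPart_sub y m, hlevel, edgeVariation_smul,
        edgeVariation_indicator, abs_of_pos hm, mul_left_comm, mul_assoc]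
    have hsum : ∑ i, y i = m * #T + ∑ i, z i := by
      have hpt (i : V) : y i = min (y i) m + z i := by
        rcases le_total (y i) m with h | h <;> simp [z, h, sub_nonpos.2 h]
      rw [sum_congr rfl fun i _ => hpt i, sum_add_distrib]
      simp [congrFun hlevel, Set.indicator_apply, mul_comm]
    have hzT : ({i | z i ≠ 0} : Finset V) ⊆ T.erase i₀ := by
      intro i hi
      have hmi : m < y i := by simpa [z] using hi
      exact mem_erase.2
        ⟨fun h => by simp [h, m] at hmi, mem_filter.2 ⟨mem_univ _, (hm.trans hmi).ne'⟩⟩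
    have hz := ih _ ((card_le_card hzT).trans_lt (card_erase_lt_of_mem hi₀) |>.trans_eq hk)
      (fun i => posPart_nonneg _)
      (fun S hS => hcut S (hS.trans (hzT.trans (erase_subset _ _)))) rfl
    calc 2 * φ * ∑ i, y i = 2 * m * (φ * #T) + 2 * φ * ∑ i, z i := by rw [hsum]; ring
      _ ≤ 2 * m * G.cutSize T + G.edgeVariation z := by gcongr; exact hcut T subset_rfl hT
      _ = G.edgeVariation y := hE.symm

theorem two_mul_conductance_mul_sum_le_edgeVariation {y : V → ℝ} (hy : 0 ≤ y)
    (hsupp : 2 * #{i | y i ≠ 0} ≤ Fintype.card V) :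
    2 * G.conductance * ∑ i, y i ≤ G.edgeVariation y :=
  G.two_mul_mul_sum_le_edgeVariation_of_cutSize hy fun _ hS hne =>
    G.conductance_mul_card_le_cutSize hne ((Nat.mul_le_mul_left 2 (card_le_card hS)).trans hsupp)

theorem conductance_le_edgeVariation_div {x : V → ℝ} (hx : x ≠ 0)
    (hneg : (Fintype.card V : ℝ) ≤ 2 * #{i | x i ≤ 0})
    (hpos : (Fintype.card V : ℝ) ≤ 2 * #{i | 0 ≤ x i}) :
    G.conductance ≤ G.edgeVariation x / (2 * ∑ i, |x i|) := by
  have hsupp {p : V → Prop} [DecidablePred p] (h : (Fintype.card V : ℝ) ≤ 2 * #{i | p i}) :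
      2 * #{i | ¬ p i} ≤ Fintype.card V := by
    have hcard : #{i | p i} + #{i | ¬ p i} = Fintype.card V := card_filter_add_card_filter_not p
    have : Fintype.card V ≤ 2 * #{i | p i} := by exact_mod_cast h
    omega
  have hplus := G.two_mul_conductance_mul_sum_le_edgeVariation (posPart_nonneg x)
    (by simpa using hsupp hneg)
  have hminus := G.two_mul_conductance_mul_sum_le_edgeVariation (negPart_nonneg x)
    (by simpa using hsupp hpos)
  have habs : ∑ i, |x i| = ∑ i, x⁺ i + ∑ i, x⁻ i := by
    simp [← posPart_add_negPart, sum_add_distrib]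
  have hmass : 0 < ∑ i, |x i| := by
    obtain ⟨i, hi⟩ := Function.ne_iff.1 hx
    exact sum_pos' (fun j _ => abs_nonneg _) ⟨i, mem_univ i, abs_pos.2 hi⟩
  rw [le_div_iff₀ (by positivity), G.edgeVariation_eq_posPart_add_negPart, habs]
  linarith

theorem isLeast_conductance (hV : 2 ≤ Fintype.card V) :
    IsLeast {r | ∃ x : V → ℝ, x ≠ 0 ∧ (Fintype.card V : ℝ) ≤ 2 * #{i | x i ≤ 0} ∧
      (Fintype.card V : ℝ) ≤ 2 * #{i | 0 ≤ x i} ∧ r = G.edgeVariation x / (2 * ∑ i, |x i|)}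
      G.conductance := by
  obtain ⟨S, hS, hSV, hφ⟩ := G.conductance_mem_cutRatios hV
  refine ⟨⟨(S : Set V).indicator 1, ?_, ?_, ?_, ?_⟩, ?_⟩
  · obtain ⟨v, hv⟩ := hS
    exact Function.ne_iff.2 ⟨v, by simp [hv]⟩
  · have hneg : ({i | (S : Set V).indicator (1 : V → ℝ) i ≤ 0} : Finset V) = Sᶜ := by
      ext i; by_cases hi : i ∈ S <;> simp [hi]
    rw [hneg, card_compl]
    exact_mod_cast (by omega : Fintype.card V ≤ 2 * (Fintype.card V - #S))
  · have hnonneg : ({i | 0 ≤ (S : Set V).indicator (1 : V → ℝ) i} : Finset V) = univ := by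
      ext i; by_cases hi : i ∈ S <;> simp [hi]
    rw [hnonneg, card_univ]
    exact_mod_cast (by omega : Fintype.card V ≤ 2 * Fintype.card V)
  · have hmass : ∑ i, |(S : Set V).indicator (1 : V → ℝ) i| = #S := by
      simp [Set.indicator_apply, apply_ite]
    rw [hφ, edgeVariation_indicator, hmass, mul_div_mul_left _ _ two_ne_zero]
  · rintro r ⟨x, hx, hneg, hpos, rfl⟩
    exact G.conductance_le_edgeVariation_div hx hneg hpos

end SimpleGraph

theorem conductance_variational_general (n : ℕ) (hn : 2 ≤ n)
    (G : SimpleGraph (Fin n)) [DecidableRel G.Adj] :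
    IsLeast
      { r : ℝ | ∃ x : Fin n → ℝ, x ≠ 0 ∧
          (n : ℝ) ≤ 2 * ((Finset.univ.filter fun i => x i ≤ 0).card : ℝ) ∧
          (n : ℝ) ≤ 2 * ((Finset.univ.filter fun i => 0 ≤ x i).card : ℝ) ∧
          r = (∑ i, ∑ j, if G.Adj i j then |x i - x j| else 0) / (2 * ∑ i, |x i|) }
      (sInf { r : ℝ | ∃ S : Finset (Fin n), S.Nonempty ∧ 2 * S.card ≤ n ∧
          r = (∑ i ∈ S, ∑ j ∈ Sᶜ, if G.Adj i j then (1 : ℝ) else 0) / (S.card : ℝ) }) := by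
  simpa only [Fintype.card_fin, SimpleGraph.conductance, SimpleGraph.cutRatios,
    SimpleGraph.edgeVariation, SimpleGraph.cutSize] using G.isLeast_conductance (by simpa using hn)

/-- Variational (ℓ₁) characterization of conductance: the conductance of a connected graph
equals the minimum of `ψ(x) = (∑_{(i,j)∈E}|x_i-x_j|)/(∑_i |x_i|)` over nonzero vectors `x`
with median 0, and this minimum is attained. -/
theorem conductance_variational (n : ℕ) (hn : 2 ≤ n)
    (G : SimpleGraph (Fin n)) [DecidableRel G.Adj] (hconn : G.Connected) :
    IsLeast
      { r : ℝ | ∃ x : Fin n → ℝ, x ≠ 0 ∧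
          (n : ℝ) ≤ 2 * ((Finset.univ.filter fun i => x i ≤ 0).card : ℝ) ∧
          (n : ℝ) ≤ 2 * ((Finset.univ.filter fun i => 0 ≤ x i).card : ℝ) ∧
          r = (∑ i, ∑ j, if G.Adj i j then |x i - x j| else 0) / (2 * ∑ i, |x i|) }
      (sInf { r : ℝ | ∃ S : Finset (Fin n), S.Nonempty ∧ 2 * S.card ≤ n ∧
          r = (∑ i ∈ S, ∑ j ∈ Sᶜ, if G.Adj i j then (1 : ℝ) else 0) / (S.card : ℝ) }) :=
  conductance_variational_general n hn G
end

section
/- In the star network S_n with center node 1, external liabilities b = 1 for all nodes, external assets c = n·e₁, internal liabilities p_{1i} = 1 from the center to each peripheral node i, bailout values L = n·1, budget Λ = n, and point-mass shock X = c: (a) bailing out only the center node yields total clearing payments 2n - 1; (b) any discrete allocation z̄ ∈ {0,1}ⁿ satisfying the absolute-equality Gini constraint ∑_{j≠1}|z̄₁ - z̄_j| = 0 together with the budget constraint nᵀ(n·z̄) ≤ n must have z̄ = 0, and then the total clearing payments equal 0. -/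
/-!
On the star only the center owes anything inside the network, so the clearing equations decouple:
the center pays `min (p 0) (e 0)` out of its external assets `e 0`, and each peripheral node `j`
pays `min (p j) (w * pbar 0 + e j)`. Bailing out the center makes every node solvent; the only
bailout allocation the Gini and budget constraints allow is zero, under which nobody can pay.
-/

open Matrix Finset

theorem eq_of_sum_abs_sub_eq_zero {ι : Type*} [Fintype ι] [DecidableEq ι] {z : ι → ℝ} {i : ι}
    (h : ∑ j ∈ univ.erase i, |z i - z j| = 0) (j : ι) : z j = z i := by
  obtain rfl | hj := eq_or_ne j i
  · rfl
  have hij : |z i - z j| = 0 :=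
    (sum_eq_zero_iff_of_nonneg fun _ _ ↦ abs_nonneg _).mp h j (mem_erase.mpr ⟨hj, mem_univ j⟩)
  linarith [abs_eq_zero.mp hij]

section Star

variable {n : ℕ} [NeZero n]

theorem sum_fin_eq_of_apply_ne_zero {f : Fin n → ℝ} {a b : ℝ} (h0 : f 0 = a)
    (h : ∀ j, j ≠ 0 → f j = b) : ∑ j, f j = a + (n - 1) * b := by
  rw [← add_sum_erase _ _ (mem_univ 0), h0, sum_congr rfl fun j hj ↦ h j (ne_of_mem_erase hj),
    sum_const, card_erase_of_mem (mem_univ 0), card_univ, Fintype.card_fin, nsmul_eq_mul,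
    Nat.cast_pred (Nat.pos_of_neZero n)]

/-- With equal bailout costs `n` and budget `n`, the Gini constraint `g = 0` forces the all-or-nothing
choice, and bailing out all `n ≥ 2` nodes is over budget. -/
theorem allocation_eq_zero_of_gini_eq_zero (hn : 2 ≤ n) {z : Fin n → ℝ}
    (hz01 : ∀ i, z i = 0 ∨ z i = 1) (hgini : ∑ j ∈ univ.erase 0, |z 0 - z j| = 0)
    (hbudget : ∑ j, (n : ℝ) * z j ≤ n) (i : Fin n) : z i = 0 := by
  have hconst := eq_of_sum_abs_sub_eq_zero hgini
  have hcost : ∑ j, (n : ℝ) * z j = n * n * z 0 := by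
    simp only [hconst, sum_const, card_univ, Fintype.card_fin, nsmul_eq_mul]
    ring
  have hn' : (2 : ℝ) ≤ n := by exact_mod_cast hn
  rw [hconst]
  rcases hz01 0 with h | h
  · exact h
  · rw [hcost, h] at hbudget
    nlinarith

variable {w : ℝ} {A : Matrix (Fin n) (Fin n) ℝ}

theorem star_transpose_mulVec (hA : ∀ i j, A i j = if i = 0 ∧ j ≠ 0 then w else 0)
    (v : Fin n → ℝ) (j : Fin n) : (Aᵀ *ᵥ v) j = if j = 0 then 0 else w * v 0 := by
  simp only [mulVec, dotProduct, transpose_apply, hA]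
  split_ifs with hj
  · simp [hj]
  · rw [sum_eq_single 0] <;> simp_all

variable {p e pbar : Fin n → ℝ}

theorem star_clearing_center (hA : ∀ i j, A i j = if i = 0 ∧ j ≠ 0 then w else 0)
    (hfix : ∀ j, pbar j = min (p j) ((Aᵀ *ᵥ pbar) j + e j)) : pbar 0 = min (p 0) (e 0) := by
  rw [hfix, star_transpose_mulVec hA, if_pos rfl, zero_add]

theorem star_clearing_peripheral (hA : ∀ i j, A i j = if i = 0 ∧ j ≠ 0 then w else 0)
    (hfix : ∀ j, pbar j = min (p j) ((Aᵀ *ᵥ pbar) j + e j)) {j : Fin n} (hj : j ≠ 0) :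
    pbar j = min (p j) (w * pbar 0 + e j) := by
  rw [hfix, star_transpose_mulVec hA, if_neg hj]

end Star

/-- Unbounded discrete Price of Fairness on the star network: bailing out the center
yields total clearing payments `2n - 1`, while any 0/1 allocation satisfying the
absolute-equality Gini constraint and the budget constraint must be zero, yielding total
clearing payments `0`. -/
theorem star_unbounded_discrete_pof (n : ℕ) [NeZero n] (hn : 2 ≤ n)
    (A : Matrix (Fin n) (Fin n) ℝ)
    (hA : ∀ i j, A i j = if i = 0 ∧ j ≠ 0 then 1 / (n : ℝ) else 0)
    (p : Fin n → ℝ) (hp : ∀ i, p i = if i = 0 then (n : ℝ) else 1)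
    (pbar : Fin n → ℝ)
    (hfix : ∀ j, pbar j
        = min (p j) ((Aᵀ.mulVec pbar) j + (if j = 0 then (n : ℝ) else 0)))
    (zbar : Fin n → ℝ) (hz01 : ∀ i, zbar i = 0 ∨ zbar i = 1)
    (hgini : ∑ j ∈ Finset.univ.erase 0, |zbar 0 - zbar j| = 0)
    (hbudget : ∑ j, (n : ℝ) * zbar j ≤ (n : ℝ))
    (pbar' : Fin n → ℝ)
    (hfix' : ∀ j, pbar' j = min (p j) ((Aᵀ.mulVec pbar') j + (n : ℝ) * zbar j)) :
    (∑ j, pbar j = 2 * (n : ℝ) - 1) ∧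
    (∀ i, zbar i = 0) ∧ ∑ j, pbar' j = 0 := by
  have hn0 : (n : ℝ) ≠ 0 := Nat.cast_ne_zero.mpr (NeZero.ne n)
  have hcenter : pbar 0 = n := by
    simp [star_clearing_center hA hfix, hp]
  have hperipheral : ∀ j, j ≠ 0 → pbar j = 1 := fun j hj ↦ by
    simp [star_clearing_peripheral hA hfix hj, hp, hj, hcenter, hn0]
  have hzero := allocation_eq_zero_of_gini_eq_zero hn hz01 hgini hbudget
  have hcenter' : pbar' 0 = 0 := by
    simp [star_clearing_center hA hfix', hp, hzero]
  refine ⟨?_, hzero, sum_eq_zero fun j _ ↦ ?_⟩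
  · rw [sum_fin_eq_of_apply_ne_zero hcenter hperipheral]
    ring
  · obtain rfl | hj := eq_or_ne j 0
    · exact hcenter'
    · simp [star_clearing_peripheral hA hfix' hj, hp, hj, hcenter', hzero]
end
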